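/- Let a_1 ≥ 1, b ≥ 1, a_2 ≥ 0, and let w be any binary word of length a_1 + b + a_2 - 2 containing exactly a_1 + a_2 - 2 ones (so a_1 + a_2 ≥ 2). Then 3·(value of 1^{a_1} 0^b 1^{a_2}) < 4·(value of 11 w), where both words have length a_1 + b + a_2. -/

import Mathlib

/-! A word of length `n + 2` has value below `2 ^ (n + 2) = 4 * 2 ^ n`, while `11w` with `|w| = n`
has value at least `3 * 2 ^ n`. -/

/-- Base-2 value of a binary word (most significant bit first). -/
def val (w : List Bool) : ℕ :=
  w.foldl (fun n b => 2 * n + b.toNat) 0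

lemma foldl_eq_mul_two_pow_add_val (w : List Bool) (n : ℕ) :
    w.foldl (fun n b => 2 * n + b.toNat) n = n * 2 ^ w.length + val w := by
  induction w generalizing n with
  | nil => simp [val]
  | cons a t ih =>
    have hcons : val (a :: t) = a.toNat * 2 ^ t.length + val t := by
      rw [val, List.foldl_cons, ih]
      ring
    rw [List.foldl_cons, ih, hcons, List.length_cons]
    ring

lemma val_append (u v : List Bool) : val (u ++ v) = val u * 2 ^ v.length + val v := by
  rw [val, List.foldl_append, foldl_eq_mul_two_pow_add_val]
  rfl

lemma val_cons (a : Bool) (w : List Bool) : val (a :: w) = a.toNat * 2 ^ w.length + val w := by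
  simpa [val] using val_append [a] w

lemma val_lt_two_pow_length (w : List Bool) : val w < 2 ^ w.length := by
  induction w with
  | nil => simp [val]
  | cons a t ih =>
    rw [val_cons, List.length_cons, pow_succ]
    have : a.toNat ≤ 1 := Bool.toNat_le a
    nlinarith

lemma three_mul_val_lt_four_mul_val_true_true_append (u w : List Bool)
    (hu : u.length ≤ w.length + 2) : 3 * val u < 4 * val ([true, true] ++ w) :=
  calc 3 * val u < 3 * 2 ^ u.length := by
        have := val_lt_two_pow_length u; omega
    _ ≤ 3 * 2 ^ (w.length + 2) := by gcongr; norm_num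
    _ = 4 * (val [true, true] * 2 ^ w.length) := by simp [val]; ring
    _ ≤ 4 * val ([true, true] ++ w) := by rw [val_append]; omega

theorem stmt15_general (a1 b a2 : ℕ)
    (w : List Bool) (hl : w.length = a1 + b + a2 - 2) :
    3 * val (List.replicate a1 true ++ List.replicate b false ++ List.replicate a2 true) <
      4 * val ([true, true] ++ w) := by
  apply three_mul_val_lt_four_mul_val_true_true_append
  simp only [List.length_append, List.length_replicate]
  omega

theorem stmt15 (a1 b a2 : ℕ) (ha1 : 1 ≤ a1) (hb : 1 ≤ b) (ha : 2 ≤ a1 + a2)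
    (w : List Bool) (hl : w.length = a1 + b + a2 - 2) (hc : w.count true = a1 + a2 - 2) :
    3 * val (List.replicate a1 true ++ List.replicate b false ++ List.replicate a2 true) <
      4 * val ([true, true] ++ w) :=
  stmt15_general a1 b a2 w hl
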